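/- arXiv:2405.18453 — 9 statements merged into one kernel-verified Lean document; each statement's English description precedes it below -/
import Mathlib

section
/- A bipartite tournament is acyclic if and only if it contains no directed cycle of length 4. -/
/-- `f` gives the partite set (as a `Bool`) of each vertex; `A` is the arc relation.
`IsBipTournament f A` says `A` is an orientation of the complete bipartite graph with
(nonempty) partite sets `f ⁻¹ true` and `f ⁻¹ false`. -/
def IsBipTournament {V : Type*} (f : V → Bool) (A : V → V → Prop) : Prop :=
  (∃ v, f v = true) ∧ (∃ v, f v = false) ∧
  (∀ u v, f u = f v → ¬ A u v) ∧ (∀ u v, f u ≠ f v → (A u v ↔ ¬ A v u))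

/-- `T` is a tournament (on the whole vertex type). -/
def IsTournament {V : Type*} (T : V → V → Prop) : Prop :=
  (∀ v, ¬ T v v) ∧ ∀ u v, u ≠ v → (T u v ↔ ¬ T v u)

/-- `T` is a tournament completion of the digraph with arc relation `A`. -/
def IsCompletion {V : Type*} (A T : V → V → Prop) : Prop :=
  IsTournament T ∧ ∀ u v, A u v → T u v
/-- Cyclic successor in `Fin k`. -/
def cyc {k : ℕ} (i : Fin k) : Fin k :=
  ⟨(i.val + 1) % k, Nat.mod_lt _ (lt_of_le_of_lt (Nat.zero_le _) i.isLt)⟩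

/-- `c` lists the vertices of a directed cycle of length `k` in the digraph `A`. -/
def IsDicycle {V : Type*} (A : V → V → Prop) (k : ℕ) (c : Fin k → V) : Prop :=
  2 ≤ k ∧ Function.Injective c ∧ ∀ i, A (c i) (c (cyc i))

/-- The digraph `A` has no directed cycle. -/
def Acyclic {V : Type*} (A : V → V → Prop) : Prop :=
  ¬ ∃ (k : ℕ) (c : Fin k → V), IsDicycle A k c

lemma cyc_eq_add_one {i : Fin 4} : cyc i = i + 1 := by
  apply Fin.ext
  simp [cyc, Fin.add_def]

lemma cyc_mk_lt {k j : ℕ} (hj : j < k) (h : j + 1 < k) :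
    cyc ⟨j, hj⟩ = ⟨j + 1, h⟩ := by
  apply Fin.ext
  simp [cyc, Nat.mod_eq_of_lt h]

lemma cyc_mk_last {k : ℕ} (hk : 1 ≤ k) (h : k - 1 < k) :
    cyc ⟨k - 1, h⟩ = ⟨0, by omega⟩ := by
  apply Fin.ext
  simp [cyc, Nat.sub_add_cancel hk]

lemma bool_chain3 : ∀ a b c : Bool, a ≠ b → b ≠ c → c ≠ a → False := by decide

lemma bool_chain4 : ∀ a b c d : Bool, a ≠ b → b ≠ c → c ≠ d → d ≠ a := by decide

set_option maxHeartbeats 1000000 in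
/-- A bipartite tournament is acyclic iff it contains no directed cycle of length 4. -/
theorem stmt_1 {V : Type*} [Fintype V] (f : V → Bool) (A : V → V → Prop)
    (h : IsBipTournament f A) :
    Acyclic A ↔ ¬ ∃ c : Fin 4 → V, Function.Injective c ∧ ∀ i, A (c i) (c (i + 1)) := by
  obtain ⟨-, -, hsame, hdiff⟩ := h
  constructor
  · rintro hac ⟨c, hinj, harc⟩
    exact hac ⟨4, c, by norm_num, hinj, fun i => by rw [cyc_eq_add_one]; exact harc i⟩
  · intro h4 hex
    obtain ⟨k, hk⟩ := hex
    revert hk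
    induction k using Nat.strong_induction_on with
    | _ k ih =>
      rintro ⟨c, hk2, hinj, harc⟩
      have hne : ∀ i, f (c i) ≠ f (c (cyc i)) := fun i hf => hsame _ _ hf (harc i)
      rcases Nat.lt_or_ge k 5 with hk5 | hk5
      · -- k ∈ {2,3,4}
        interval_cases k
        · -- k = 2
          have h01 := harc ⟨0, by omega⟩
          have h10 := harc ⟨1, by omega⟩
          have e0 : cyc (⟨0, by omega⟩ : Fin 2) = ⟨1, by omega⟩ := by decide
          have e1 : cyc (⟨1, by omega⟩ : Fin 2) = ⟨0, by omega⟩ := by decide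
          rw [e0] at h01
          rw [e1] at h10
          have hf := hne ⟨0, by omega⟩
          rw [e0] at hf
          exact (hdiff _ _ hf).mp h01 h10
        · -- k = 3
          have e0 : cyc (⟨0, by omega⟩ : Fin 3) = ⟨1, by omega⟩ := by decide
          have e1 : cyc (⟨1, by omega⟩ : Fin 3) = ⟨2, by omega⟩ := by decide
          have e2 : cyc (⟨2, by omega⟩ : Fin 3) = ⟨0, by omega⟩ := by decide
          have hf0 := hne ⟨0, by omega⟩; simp only [e0] at hf0
          have hf1 := hne ⟨1, by omega⟩; simp only [e1] at hf1
          have hf2 := hne ⟨2, by omega⟩; simp only [e2] at hf2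
          exact bool_chain3 _ _ _ hf0 hf1 hf2
        · -- k = 4
          exact h4 ⟨c, hinj, fun i => by rw [← cyc_eq_add_one]; exact harc i⟩
      · -- k ≥ 5
        have e0 : cyc (⟨0, by omega⟩ : Fin k) = ⟨1, by omega⟩ := cyc_mk_lt _ (by omega)
        have e1 : cyc (⟨1, by omega⟩ : Fin k) = ⟨2, by omega⟩ := cyc_mk_lt _ (by omega)
        have e2 : cyc (⟨2, by omega⟩ : Fin k) = ⟨3, by omega⟩ := cyc_mk_lt _ (by omega)
        have hf0 := hne ⟨0, by omega⟩; simp only [e0] at hf0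
        have hf1 := hne ⟨1, by omega⟩; simp only [e1] at hf1
        have hf2 := hne ⟨2, by omega⟩; simp only [e2] at hf2
        have hf30 : f (c ⟨3, by omega⟩) ≠ f (c ⟨0, by omega⟩) :=
          bool_chain4 _ _ _ _ hf0 hf1 hf2
        by_cases hA : A (c ⟨3, by omega⟩) (c ⟨0, by omega⟩)
        · -- explicit 4-cycle
          refine h4 ⟨fun i => c ⟨i.val, by omega⟩, ?_, ?_⟩
          · intro i j hij
            have := hinj hij
            apply Fin.ext
            simpa [Fin.mk.injEq] using congrArg Fin.val this
          · intro i
            fin_cases i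
            · have := harc ⟨0, by omega⟩; simp only [e0] at this; exact this
            · have := harc ⟨1, by omega⟩; simp only [e1] at this; exact this
            · have := harc ⟨2, by omega⟩; simp only [e2] at this; exact this
            · exact hA
        · -- shortcut: cycle of length k - 2
          have h03 : A (c ⟨0, by omega⟩) (c ⟨3, by omega⟩) :=
            (hdiff _ _ hf30.symm).mpr hA
          refine ih (k - 2) (by omega) ⟨fun i =>
            if h : i.val = 0 then c ⟨0, by omega⟩
            else c ⟨i.val + 2, by have := i.isLt; omega⟩, by omega, ?_, ?_⟩
          · intro i j hij
            by_cases hi : i.val = 0 <;> by_cases hj : j.val = 0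
            · exact Fin.ext (by omega)
            · simp only [dif_pos hi, dif_neg hj] at hij
              have := Fin.mk_eq_mk.mp (hinj hij)
              exact Fin.ext (by omega)
            · simp only [dif_neg hi, dif_pos hj] at hij
              have := Fin.mk_eq_mk.mp (hinj hij)
              exact Fin.ext (by omega)
            · simp only [dif_neg hi, dif_neg hj] at hij
              have := Fin.mk_eq_mk.mp (hinj hij)
              exact Fin.ext (by omega)
          · intro i
            have hi2 : i.val < k - 2 := i.isLt
            have key : ∀ (a b : ℕ) (ha : a < k) (hb : b < k) (a' b' : ℕ)
                (ha' : a' < k) (hb' : b' < k), a = a' → b = b' →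
                A (c ⟨a', ha'⟩) (c ⟨b', hb'⟩) → A (c ⟨a, ha⟩) (c ⟨b, hb⟩) := by
              intro a b ha hb a' b' ha' hb' h1 h2 hAr
              subst h1; subst h2; exact hAr
            have harc2 : ∀ (m : ℕ) (hm : m + 1 < k),
                A (c ⟨m, by omega⟩) (c ⟨m + 1, hm⟩) := by
              intro m hm1
              have := harc ⟨m, by omega⟩
              simp only [cyc_mk_lt (show m < k by omega) hm1] at this
              exact this
            have harc3 : ∀ (hk1 : k - 1 < k), A (c ⟨k - 1, hk1⟩) (c ⟨0, by omega⟩) := by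
              intro hk1
              have := harc ⟨k - 1, hk1⟩
              simp only [cyc_mk_last (show 1 ≤ k by omega) hk1] at this
              exact this
            by_cases hi0 : i.val = 0
            · have hcv : (cyc i).val = 1 := by
                show (i.val + 1) % (k - 2) = 1
                rw [hi0]
                exact Nat.mod_eq_of_lt (by omega)
              simp only [dif_pos hi0, dif_neg (show ¬(cyc i).val = 0 by omega)]
              exact key _ _ _ _ _ _ _ _ (by omega) (by omega) h03
            · by_cases hlast : i.val = k - 3
              · have hcv : (cyc i).val = 0 := by
                  show (i.val + 1) % (k - 2) = 0
                  rw [hlast, show k - 3 + 1 = k - 2 by omega, Nat.mod_self]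
                simp only [dif_neg hi0, dif_pos hcv]
                exact key _ _ _ _ _ _ _ _ (by omega) (by omega) (harc3 (by omega))
              · have hcv : (cyc i).val = i.val + 1 := by
                  show (i.val + 1) % (k - 2) = i.val + 1
                  exact Nat.mod_eq_of_lt (by omega)
                simp only [dif_neg hi0, dif_neg (show ¬(cyc i).val = 0 by omega)]
                exact key _ _ _ _ _ _ _ _ (by omega) (by omega)
                  (harc2 (i.val + 2) (by omega))
end

section
/- A bipartite tournament D is acyclic if and only if D is bitransitive, i.e., for all vertices v1, v2, v3, v4, if v1→v2, v2→v3, and v3→v4 are arcs of D then v1→v4 is an arc of D. -/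
/-- A bipartite tournament is acyclic iff it is bitransitive. -/
theorem stmt_2 {V : Type*} [Fintype V] (f : V → Bool) (A : V → V → Prop)
    (h : IsBipTournament f A) :
    Acyclic A ↔ ∀ v1 v2 v3 v4 : V, A v1 v2 → A v2 v3 → A v3 v4 → A v1 v4 := by
  obtain ⟨-, -, hsame, hopp⟩ := h
  have hne : ∀ u v, A u v → f u ≠ f v := fun u v huv he => hsame u v he huv
  constructor
  · intro hac v1 v2 v3 v4 h12 h23 h34
    by_contra h14
    have bool3 : ∀ a b c : Bool, a ≠ b → b ≠ c → a = c := by decide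
    have f12 := hne _ _ h12
    have f23 := hne _ _ h23
    have f34 := hne _ _ h34
    have f13 : f v1 = f v3 := bool3 _ _ _ f12 f23
    have f24 : f v2 = f v4 := bool3 _ _ _ f23 f34
    have f14 : f v1 ≠ f v4 := fun he => f12 (he.trans f24.symm)
    have h41 : A v4 v1 := (hopp v4 v1 (Ne.symm f14)).mpr h14
    have n13 : v1 ≠ v3 := by
      rintro rfl
      exact ((hopp v1 v2 f12).mp h12) h23
    have n24 : v2 ≠ v4 := by
      rintro rfl
      exact ((hopp v2 v3 f23).mp h23) h34
    have n12 : v1 ≠ v2 := fun he => f12 (congrArg f he)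
    have n23 : v2 ≠ v3 := fun he => f23 (congrArg f he)
    have n34 : v3 ≠ v4 := fun he => f34 (congrArg f he)
    have n14 : v1 ≠ v4 := fun he => f14 (congrArg f he)
    apply hac
    refine ⟨4, fun i : Fin 4 =>
      if i.val = 0 then v1 else if i.val = 1 then v2 else if i.val = 2 then v3 else v4,
      by norm_num, ?_, ?_⟩
    · intro i j hij
      fin_cases i <;> fin_cases j <;> simp at hij ⊢ <;>
        first
          | exact (n12 hij).elim | exact (n13 hij).elim | exact (n14 hij).elim
          | exact (n23 hij).elim | exact (n24 hij).elim | exact (n34 hij).elim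
          | exact (n12 hij.symm).elim | exact (n13 hij.symm).elim
          | exact (n14 hij.symm).elim | exact (n23 hij.symm).elim
          | exact (n24 hij.symm).elim | exact (n34 hij.symm).elim
    · intro i
      fin_cases i <;> norm_num [cyc] <;> assumption
  · rintro htr ⟨k, c, hk2, hinj, harc⟩
    have hk0 : 0 < k := by omega
    set d : ℕ → V := fun n => c ⟨n % k, Nat.mod_lt _ hk0⟩ with hd
    have hstep : ∀ n, A (d n) (d (n + 1)) := by
      intro n
      have := harc ⟨n % k, Nat.mod_lt _ hk0⟩
      have he : cyc (⟨n % k, Nat.mod_lt _ hk0⟩ : Fin k) = ⟨(n+1) % k, Nat.mod_lt _ hk0⟩ := by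
        simp [cyc, Nat.add_mod_right, Nat.mod_add_mod]
      rwa [he] at this
    have hodd : ∀ j n, A (d n) (d (n + (2 * j + 1))) := by
      intro j
      induction j with
      | zero => intro n; simpa using hstep n
      | succ j ih =>
        intro n
        have h1 := ih n
        have h2 := hstep (n + (2 * j + 1))
        have h3 := hstep (n + (2 * j + 2))
        have := htr _ _ _ _ h1 (by convert h2 using 2 <;> omega) (by convert h3 using 2 <;> omega)
        convert this using 2 <;> omega
    have hd0 : d k = d 0 := by simp [hd, Nat.mod_self, Nat.zero_mod]
    rcases Nat.even_or_odd k with ⟨m, hm⟩ | ⟨m, hm⟩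
    · have hm1 : 1 ≤ m := by omega
      have h1 : A (d 0) (d (2 * (m - 1) + 1)) := by simpa using hodd (m - 1) 0
      have hk1 : 2 * (m - 1) + 1 = k - 1 := by omega
      rw [hk1] at h1
      have h2 : A (d (k - 1)) (d 0) := by
        have := hstep (k - 1)
        rwa [show k - 1 + 1 = k by omega, hd0] at this
      exact ((hopp _ _ (hne _ _ h1)).mp h1) h2
    · have h1 : A (d 0) (d (2 * m + 1)) := by simpa using hodd m 0
      rw [show 2 * m + 1 = k by omega, hd0] at h1
      exact hsame _ _ rfl h1
end

section
/- A finite bipartite tournament D is acyclic if and only if D is isomorphic to D_X for some finite nonempty set X of positive integers, where D_X has vertex set X and arcs ab whenever a < b and a, b have different parities. -/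
/-!
On a directed cycle, a vertex maximising a map to a linear order has an out-neighbour with a
larger value unless the map fails to increase along some arc; hence every `D_X` is acyclic.
Conversely, in a finite acyclic digraph reachability is a strict order (an infinite walk would
revisit a vertex and close a cycle), so counting the vertices from which `v` is reachable, with
ties broken by an enumeration, gives an injective ranking `rk` that increases along arcs. The
labels `2 * rk v + 1 + [f v]` are positive, increase along arcs, and their parity records the
part of `v`. In a bipartite tournament such a labelling determines the arcs: of two vertices in
different parts exactly one of `u → v`, `v → u` is an arc, and it must go up.
-/

open Function Relation

section Digraph

variable {V : Type*} {A : V → V → Prop}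

theorem acyclic_of_map_lt {β : Type*} [LinearOrder β] (φ : V → β)
    (hφ : ∀ u v, A u v → φ u < φ v) : Acyclic A := by
  rintro ⟨k, c, hk, -, hc⟩
  have : Nonempty (Fin k) := ⟨⟨0, by omega⟩⟩
  obtain ⟨i, hi⟩ := Finite.exists_max (φ ∘ c)
  exact (hφ _ _ (hc i)).not_ge (hi (cyc i))

/-- The first repetition `x i = x j` of an infinite walk closes a directed cycle
`x i → ⋯ → x (j - 1) → x i`. -/
theorem not_acyclic_of_walk [Finite V] (hirr : ∀ v, ¬ A v v) (x : ℕ → V)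
    (hx : ∀ n, A (x n) (x (n + 1))) : ¬ Acyclic A := by
  classical
  have hrep : ∃ j, ∃ i < j, x j = x i := by
    obtain ⟨m, n, hmn, hxmn⟩ := Finite.exists_ne_map_eq_of_infinite x
    rcases hmn.lt_or_gt with h | h
    · exact ⟨n, m, h, hxmn.symm⟩
    · exact ⟨m, n, h, hxmn⟩
  obtain ⟨i, hij, hxij⟩ := Nat.find_spec hrep
  have hmin := fun j (hj : j < Nat.find hrep) => Nat.find_min hrep hj
  generalize Nat.find hrep = j at hij hxij hmin
  have hk : 2 ≤ j - i := by
    by_contra! hk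
    obtain rfl : j = i + 1 := by omega
    exact hirr (x i) (hxij ▸ hx i)
  refine fun hac => hac ⟨j - i, fun t => x (i + t), hk, fun t t' htt' => ?_, fun t => ?_⟩
  · by_contra hne
    rcases (Fin.val_injective.ne hne).lt_or_gt with h | h
    · exact hmin (i + t') (by omega) ⟨i + t, by omega, htt'.symm⟩
    · exact hmin (i + t) (by omega) ⟨i + t', by omega, htt'⟩
  · simp only [cyc]
    rcases Nat.lt_or_ge (t + 1) (j - i) with h | h
    · rw [Nat.mod_eq_of_lt h, ← add_assoc]
      exact hx _
    · have hwrap : x (i + t + 1) = x i := by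
        rw [← hxij]
        congr 1
        omega
      rw [show (t : ℕ) + 1 = j - i by omega, Nat.mod_self, add_zero, ← hwrap]
      exact hx _

theorem Acyclic.not_transGen_self [Finite V] (hirr : ∀ v, ¬ A v v) (hac : Acyclic A) (v : V) :
    ¬ TransGen A v v := by
  have hwf : WellFounded (swap A) := wellFounded_iff_isEmpty_descending_chain.mpr
    ⟨fun ⟨x, hx⟩ => not_acyclic_of_walk hirr x hx hac⟩
  exact fun hv => hwf.transGen.irrefl.irrefl v (transGen_swap.mpr hv)

theorem exists_injective_rank [Fintype V] {r : V → V → Prop}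
    (htrans : ∀ a b c, r a b → r b c → r a c) (hirr : ∀ v, ¬ r v v) :
    ∃ rk : V → ℕ, Injective rk ∧ ∀ u v, r u v → rk u < rk v := by
  classical
  let idx := Fintype.equivFin V
  let below : V → ℕ := fun v => (Finset.univ.filter (r · v)).card
  have hbelow : ∀ u v, r u v → below u < below v := fun u v huv => by
    have hsub : Finset.univ.filter (r · u) ⊆ Finset.univ.filter (r · v) := fun w hw => by
      simp only [Finset.mem_filter, Finset.mem_univ, true_and] at hw ⊢
      exact htrans _ _ _ hw huv
    exact Finset.card_lt_card <| (Finset.ssubset_iff_of_subset hsub).mpr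
      ⟨u, by simpa using huv, by simpa using hirr u⟩
  refine ⟨fun v => Fintype.card V * below v + idx v, fun u v huv => ?_, fun u v huv => ?_⟩
  · have hmod : ∀ w, (Fintype.card V * below w + idx w) % Fintype.card V = idx w := fun w => by
      rw [Nat.mul_add_mod, Nat.mod_eq_of_lt (idx w).isLt]
    exact idx.injective <| Fin.ext <| by
      rw [← hmod u, ← hmod v]
      exact congrArg (· % Fintype.card V) huv
  · have := hbelow u v huv
    have := (idx u).isLt
    nlinarith

end Digraph

section BipTournament

variable {V : Type*} {f : V → Bool} {A : V → V → Prop}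

theorem IsBipTournament.not_arc_self (h : IsBipTournament f A) (v : V) : ¬ A v v :=
  h.2.2.1 v v rfl

theorem IsBipTournament.arc_iff_of_map_lt (h : IsBipTournament f A) {β : Type*} [LinearOrder β]
    (φ : V → β) (hφ : ∀ u v, A u v → φ u < φ v) (u v : V) :
    A u v ↔ φ u < φ v ∧ f u ≠ f v := by
  obtain ⟨-, -, hsame, hcross⟩ := h
  refine ⟨fun huv => ⟨hφ u v huv, fun hf => hsame u v hf huv⟩, fun ⟨hlt, hf⟩ => ?_⟩
  by_contra huv
  exact (hφ v u ((hcross v u (Ne.symm hf)).mpr huv)).not_gt hlt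

end BipTournament

def parityLabel (r : ℕ) (b : Bool) : ℕ := 2 * r + 1 + b.toNat

theorem parityLabel_pos (r : ℕ) (b : Bool) : 0 < parityLabel r b := by
  unfold parityLabel; omega

theorem parityLabel_lt_parityLabel {r r' : ℕ} (b b' : Bool) (h : r < r') :
    parityLabel r b < parityLabel r' b' := by
  unfold parityLabel; cases b <;> cases b' <;> simp <;> omega

theorem eq_of_parityLabel_eq {r r' : ℕ} {b b' : Bool} (h : parityLabel r b = parityLabel r' b') :
    r = r' := by
  unfold parityLabel at h; cases b <;> cases b' <;> simp at h <;> omega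

theorem parityLabel_mod_two_ne_iff (r r' : ℕ) (b b' : Bool) :
    parityLabel r b % 2 ≠ parityLabel r' b' % 2 ↔ b ≠ b' := by
  unfold parityLabel; cases b <;> cases b' <;> simp <;> omega

theorem exists_finset_equiv_of_injective {V : Type*} [Fintype V] {N : V → ℕ} (hN : Injective N) :
    ∃ (X : Finset ℕ) (e : V ≃ {a : ℕ // a ∈ X}), ∀ v, (e v : ℕ) = N v := by
  classical
  exact ⟨(Set.range N).toFinset,
    (Equiv.ofInjective N hN).trans (Equiv.subtypeEquivRight fun _ => Set.mem_toFinset.symm),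
    fun _ => rfl⟩

/-- A finite bipartite tournament is acyclic iff it is isomorphic to `D_X` for some
finite nonempty set `X` of positive integers, where `D_X` has vertex set `X` and
arcs `a → b` whenever `a < b` and `a, b` have different parities. -/
theorem stmt_3 {V : Type*} [Fintype V] (f : V → Bool) (A : V → V → Prop)
    (h : IsBipTournament f A) :
    Acyclic A ↔
      ∃ X : Finset ℕ, X.Nonempty ∧ (∀ a ∈ X, 0 < a) ∧
        ∃ e : V ≃ {a : ℕ // a ∈ X},
          ∀ u v, A u v ↔ ((e u : ℕ) < (e v : ℕ) ∧ (e u : ℕ) % 2 ≠ (e v : ℕ) % 2) := by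
  constructor
  · intro hac
    obtain ⟨rk, hrk_inj, hrk⟩ :=
      exists_injective_rank (fun _ _ _ => TransGen.trans) (hac.not_transGen_self h.not_arc_self)
    let N v := parityLabel (rk v) (f v)
    have hN : ∀ u v, A u v → N u < N v := fun u v huv =>
      parityLabel_lt_parityLabel _ _ (hrk u v (.single huv))
    obtain ⟨X, e, he⟩ := exists_finset_equiv_of_injective (N := N)
      fun u v huv => hrk_inj (eq_of_parityLabel_eq huv)
    obtain ⟨v₀, -⟩ := h.1
    refine ⟨X, ⟨_, (e v₀).2⟩, fun a ha => ?_, e, fun u v => ?_⟩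
    · have ha' : a = N (e.symm ⟨a, ha⟩) := by simpa using he (e.symm ⟨a, ha⟩)
      exact ha' ▸ parityLabel_pos _ _
    · rw [he, he, parityLabel_mod_two_ne_iff]
      exact h.arc_iff_of_map_lt N hN u v
  · rintro ⟨X, -, -, e, he⟩
    exact acyclic_of_map_lt (fun v => (e v : ℕ)) fun u v huv => ((he u v).mp huv).1
end

section
/- Let D be a bipartite tournament with partite sets V1 and V2. If D contains a directed cycle, then every tournament completion T of D contains at least two distinct augmented (2,1)-dicycles, i.e., at least two directed 3-cycles of T, each using at least one arc not in D and having exactly two vertices in one partite set and one in the other. -/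
/-- `c` is an augmented `(2,1)`-dicycle of the completion `T` of the bipartite
tournament `(f, A)`: a directed 3-cycle of `T` using at least one arc not in `A`,
whose three vertices do not all lie in one partite set (hence exactly two in one
partite set and one in the other). -/
def Aug21 {V : Type*} (f : V → Bool) (A T : V → V → Prop) (c : Fin 3 → V) : Prop :=
  Function.Injective c ∧ (∀ i, T (c i) (c (i + 1))) ∧
  (∃ i, ¬ A (c i) (c (i + 1))) ∧ ¬ (f (c 0) = f (c 1) ∧ f (c 1) = f (c 2))

/-! A directed cycle of a bipartite tournament can be shortened along its chords until it
becomes a directed `4`-cycle `a → b → c → d → a` (a bipartite digraph has no odd cycle).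
The diagonals `ac` and `bd` join vertices of one partite set, so they are arcs of `T` but
not of `D`. However `T` orients `ac`, it closes one of the paths `a → b → c`, `c → d → a`
of `D` into an augmented `(2,1)`-dicycle, and likewise for `bd`. The first dicycle contains
`a` and `c` but misses `b` or `d`, the second contains `b` and `d`, so they are distinct. -/

namespace IsBipTournament

variable {V : Type*} {f : V → Bool} {A : V → V → Prop}

theorem not_adj_of_part_eq (h : IsBipTournament f A) {u v : V} (huv : f u = f v) : ¬ A u v :=
  h.2.2.1 u v huv

theorem adj_of_not_adj (h : IsBipTournament f A) {u v : V} (huv : f u ≠ f v) (hvu : ¬ A v u) :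
    A u v :=
  (h.2.2.2 u v huv).mpr hvu

theorem part_ne_of_adj (h : IsBipTournament f A) {u v : V} (huv : A u v) : f u ≠ f v :=
  fun e => h.not_adj_of_part_eq e huv

theorem not_adj_of_adj (h : IsBipTournament f A) {u v : V} (huv : A u v) : ¬ A v u :=
  (h.2.2.2 u v (h.part_ne_of_adj huv)).mp huv

theorem ne_of_adj (h : IsBipTournament f A) {u v : V} (huv : A u v) : u ≠ v :=
  fun e => h.part_ne_of_adj huv (congrArg f e)

theorem part_eq_of_adj_adj (h : IsBipTournament f A) {u v w : V} (huv : A u v) (hvw : A v w) :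
    f u = f w := by
  have h₁ := h.part_ne_of_adj huv
  have h₂ := h.part_ne_of_adj hvw
  revert h₁ h₂; cases f u <;> cases f v <;> cases f w <;> decide

theorem exists_four_cycle_of_isChain (h : IsBipTournament f A) :
    ∀ (l : List V) (hl : l ≠ []), l.Nodup → l.IsChain A → A (l.getLast hl) (l.head hl) →
      ∃ a b c d : V, a ≠ c ∧ b ≠ d ∧ A a b ∧ A b c ∧ A c d ∧ A d a
  | [x], _, _, _, hxx => absurd rfl (h.ne_of_adj hxx)
  | [x, a], _, _, hch, hax => by
    simp only [List.isChain_cons_cons, List.isChain_singleton, and_true] at hch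
    exact absurd hax (h.not_adj_of_adj hch)
  | [x, a, b], _, _, hch, hbx => by
    simp only [List.isChain_cons_cons, List.isChain_singleton, and_true] at hch
    exact absurd (h.part_eq_of_adj_adj hch.1 hch.2).symm (h.part_ne_of_adj hbx)
  | x :: a :: b :: c :: rest, _, hnd, hch, hcl => by
    simp only [List.isChain_cons_cons] at hch
    obtain ⟨hxa, hab, hbc, hrest⟩ := hch
    simp only [List.nodup_cons, List.mem_cons, not_or] at hnd
    by_cases hcx : A c x
    · exact ⟨x, a, b, c, hnd.1.2.1, hnd.2.1.2.1, hxa, hab, hbc, hcx⟩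
    · have hxc : A x c :=
        h.adj_of_not_adj (h.part_eq_of_adj_adj hxa hab ▸ h.part_ne_of_adj hbc) hcx
      refine exists_four_cycle_of_isChain h (x :: c :: rest) (List.cons_ne_nil _ _) ?_
        (List.isChain_cons_cons.mpr ⟨hxc, hrest⟩) (by simpa using hcl)
      simp only [List.nodup_cons, List.mem_cons, not_or]
      exact ⟨⟨hnd.1.2.2.1, hnd.1.2.2.2⟩, hnd.2.2.2⟩

theorem exists_four_cycle (h : IsBipTournament f A) {k : ℕ} {c : Fin k → V}
    (hc : IsDicycle A k c) : ∃ a b c d : V, a ≠ c ∧ b ≠ d ∧ A a b ∧ A b c ∧ A c d ∧ A d a := by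
  obtain ⟨hk, hinj, harc⟩ := hc
  refine h.exists_four_cycle_of_isChain (List.ofFn c) (mt List.ofFn_eq_nil_iff.1 (by omega))
    (List.nodup_ofFn.mpr hinj) (List.isChain_ofFn.mpr fun i hi => ?_) ?_
  · simpa [cyc, Nat.mod_eq_of_lt hi] using harc ⟨i, by omega⟩
  · have hlast : k - 1 + 1 = k := by omega
    simpa [List.getLast_ofFn, List.head_ofFn, cyc, hlast] using harc ⟨k - 1, by omega⟩

theorem aug21_of_adj_adj (h : IsBipTournament f A) {T : V → V → Prop} (hT : IsCompletion A T)
    {u v w : V} (huv : A u v) (hvw : A v w) (huw : u ≠ w) (hwu : T w u) :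
    Aug21 f A T ![u, v, w] := by
  have hfuw := h.part_eq_of_adj_adj huv hvw
  refine ⟨?_, ?_, ⟨2, ?_⟩, ?_⟩
  · have := h.ne_of_adj huv
    have := h.ne_of_adj hvw
    intro i j hij
    fin_cases i <;> fin_cases j <;> simp_all [eq_comm]
  · intro i
    fin_cases i
    exacts [hT.2 _ _ huv, hT.2 _ _ hvw, hwu]
  · exact h.not_adj_of_part_eq hfuw.symm
  · exact fun e => h.part_ne_of_adj huv e.1

theorem exists_aug21_of_four_cycle (h : IsBipTournament f A) {T : V → V → Prop}
    (hT : IsCompletion A T) {a b c d : V} (hac : a ≠ c) (hbd : b ≠ d)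
    (hab : A a b) (hbc : A b c) (hcd : A c d) (hda : A d a) :
    ∃ x, Aug21 f A T x ∧ a ∈ Set.range x ∧ c ∈ Set.range x ∧
      (b ∉ Set.range x ∨ d ∉ Set.range x) := by
  by_cases hca : T c a
  · refine ⟨_, h.aug21_of_adj_adj hT hab hbc hac hca, by simp, by simp, Or.inr ?_⟩
    simp [h.ne_of_adj hda, hbd.symm, (h.ne_of_adj hcd).symm]
  · have hac' : T a c := (hT.1.2 a c hac).mpr hca
    refine ⟨_, h.aug21_of_adj_adj hT hcd hda hac.symm hac', by simp, by simp, Or.inl ?_⟩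
    simp [h.ne_of_adj hbc, hbd, (h.ne_of_adj hab).symm]

end IsBipTournament

theorem stmt_4_general {V : Type*} (f : V → Bool) (A : V → V → Prop)
    (h : IsBipTournament f A) (hcyc : ∃ (k : ℕ) (c : Fin k → V), IsDicycle A k c)
    (T : V → V → Prop) (hT : IsCompletion A T) :
    ∃ c1 c2 : Fin 3 → V, Aug21 f A T c1 ∧ Aug21 f A T c2 ∧
      Set.range c1 ≠ Set.range c2 := by
  obtain ⟨k, σ, hσ⟩ := hcyc
  obtain ⟨a, b, c, d, hac, hbd, hab, hbc, hcd, hda⟩ := h.exists_four_cycle hσ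
  obtain ⟨x, hx, hax, hcx, hbdx⟩ := h.exists_aug21_of_four_cycle hT hac hbd hab hbc hcd hda
  obtain ⟨y, hy, hby, hdy, hacy⟩ := h.exists_aug21_of_four_cycle hT hbd hac.symm hbc hcd hda hab
  refine ⟨x, y, hx, hy, fun hxy => ?_⟩
  rw [hxy] at hax hcx hbdx
  tauto

/-- If a bipartite tournament `D` contains a directed cycle, then every tournament
completion `T` of `D` contains at least two distinct augmented `(2,1)`-dicycles. -/
theorem stmt_4 {V : Type*} [Fintype V] (f : V → Bool) (A : V → V → Prop)
    (h : IsBipTournament f A) (hcyc : ∃ (k : ℕ) (c : Fin k → V), IsDicycle A k c)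
    (T : V → V → Prop) (hT : IsCompletion A T) :
    ∃ c1 c2 : Fin 3 → V, Aug21 f A T c1 ∧ Aug21 f A T c2 ∧
      Set.range c1 ≠ Set.range c2 :=
  stmt_4_general f A h hcyc T hT
end

section
/- Let D be a bipartite tournament. There exists a tournament completion of D with no augmented (2,1)-dicycles if and only if D is acyclic. -/
section

variable {V : Type*}

theorem IsTournament.ne_of_rel {T : V → V → Prop} (hT : IsTournament T) {u v : V}
    (huv : T u v) : u ≠ v := by
  rintro rfl
  exact hT.1 u huv

theorem IsTournament.asymm {T : V → V → Prop} (hT : IsTournament T) {u v : V}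
    (huv : T u v) : ¬ T v u :=
  (hT.2 u v (hT.ne_of_rel huv)).mp huv

theorem IsTournament.rel_of_not_rel {T : V → V → Prop} (hT : IsTournament T) {u v : V}
    (hne : u ≠ v) (huv : ¬ T u v) : T v u :=
  (hT.2 v u hne.symm).mpr huv

theorem aug21_triangle {f : V → Bool} {A T : V → V → Prop} {a b c : V}
    (hab : a ≠ b) (hbc : b ≠ c) (hca : c ≠ a) (tab : T a b) (tbc : T b c) (tca : T c a)
    (hnew : ¬ A a b ∨ ¬ A b c ∨ ¬ A c a) (hfbc : f b ≠ f c) : Aug21 f A T ![a, b, c] := by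
  refine ⟨?_, ?_, ?_, ?_⟩
  · intro x y hxy
    fin_cases x <;> fin_cases y <;> simp_all [eq_comm]
  · intro i
    fin_cases i
    exacts [tab, tbc, tca]
  · rcases hnew with h | h | h
    exacts [⟨0, h⟩, ⟨1, h⟩, ⟨2, h⟩]
  · exact fun h => hfbc h.2

-- Otherwise `a`, `b`, `c` span an augmented `(2,1)`-dicycle.
theorem IsCompletion.rel_of_rel_of_arc {f : V → Bool} {A T : V → V → Prop}
    (hparts : ∀ u v, f u = f v → ¬ A u v) (hT : IsCompletion A T)
    (hfree : ∀ c : Fin 3 → V, ¬ Aug21 f A T c) {a b c : V} (hac : a ≠ c)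
    (tab : T a b) (abc : A b c) : T a c := by
  have hTour : IsTournament T := hT.1
  by_contra htac
  have tca : T c a := hTour.rel_of_not_rel hac htac
  have tbc : T b c := hT.2 b c abc
  have hbc : f b ≠ f c := fun h => hparts b c h abc
  refine hfree _ (aug21_triangle (hTour.ne_of_rel tab) (hTour.ne_of_rel tbc) hac.symm
    tab tbc tca ?_ hbc)
  cases hfa : f a <;> cases hfb : f b <;> cases hfc : f c <;> simp_all

theorem acyclic_of_forall_not_aug21 {f : V → Bool} {A T : V → V → Prop}
    (hparts : ∀ u v, f u = f v → ¬ A u v) (hT : IsCompletion A T)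
    (hfree : ∀ c : Fin 3 → V, ¬ Aug21 f A T c) : Acyclic A := by
  rintro ⟨k, c, hk, hinj, harc⟩
  have hk0 : 0 < k := by omega
  let p : ℕ → V := fun n => c ⟨n % k, Nat.mod_lt n hk0⟩
  have hp : ∀ n, A (p n) (p (n + 1)) := by
    intro n
    convert harc ⟨n % k, Nat.mod_lt n hk0⟩ using 3
    simp [cyc, Nat.add_mod]
  have hp_ne : ∀ i j, i < k → j < k → i ≠ j → p i ≠ p j := by
    intro i j hi hj hij hpij
    simpa [Fin.ext_iff, Nat.mod_eq_of_lt hi, Nat.mod_eq_of_lt hj, hij] using hinj hpij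
  have hfirst : ∀ i, 1 ≤ i → i < k → T (p 0) (p i) := by
    intro i hi
    induction i, hi using Nat.le_induction with
    | base => exact fun _ => hT.2 _ _ (hp 0)
    | succ i hi ih =>
      exact fun hik => hT.rel_of_rel_of_arc hparts hfree
        (hp_ne 0 (i + 1) hk0 hik (by omega)) (ih (by omega)) (hp i)
  have hlast : A (p (k - 1)) (p 0) := by
    simpa [Nat.sub_add_cancel hk0, p] using hp (k - 1)
  exact IsTournament.asymm hT.1 (hfirst (k - 1) (by omega) (by omega)) (hT.2 _ _ hlast)

theorem Relation.TransGen.exists_walk {A : V → V → Prop} {a b : V} (h : Relation.TransGen A a b) :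
    ∃ n, 0 < n ∧ ∃ p : ℕ → V, p 0 = a ∧ p n = b ∧ ∀ i < n, A (p i) (p (i + 1)) := by
  induction h with
  | @single b hab =>
    refine ⟨1, one_pos, fun i => if i = 0 then a else b, rfl, rfl, fun i hi => ?_⟩
    obtain rfl : i = 0 := by omega
    simpa using hab
  | @tail b c _ hbc ih =>
    obtain ⟨n, -, p, hp0, hpn, hp⟩ := ih
    refine ⟨n + 1, n.succ_pos, fun i => if i ≤ n then p i else c, by simp [hp0], by simp,
      fun i hi => ?_⟩
    rcases Nat.lt_or_ge i n with hin | hin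
    · simpa [hin.le, Nat.succ_le_of_lt hin] using hp i hin
    · obtain rfl : i = n := by omega
      simpa [hpn] using hbc

theorem Acyclic.not_closed_walk {A : V → V → Prop} (hA : Acyclic A) (hirr : ∀ v, ¬ A v v) :
    ∀ n, 0 < n → ∀ p : ℕ → V, (∀ i < n, A (p i) (p (i + 1))) → p n ≠ p 0 := by
  intro n
  induction n using Nat.strong_induction_on with
  | _ n ih =>
  intro hn p hp hclosed
  by_cases hinj : ∀ i j, i < n → j < n → p i = p j → i = j
  · rcases Nat.lt_or_ge n 2 with hn1 | hn2
    · obtain rfl : n = 1 := by omega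
      exact hirr (p 0) (hclosed ▸ hp 0 hn)
    · refine hA ⟨n, fun i => p i, hn2, fun i j h => Fin.ext (hinj i j i.2 j.2 h), fun i => ?_⟩
      rcases Nat.lt_or_ge (i + 1) n with h | h
      · simpa [cyc, Nat.mod_eq_of_lt h] using hp i i.2
      · have hi : i.val + 1 = n := by omega
        simpa [cyc, hi, hclosed] using hp i i.2
  · obtain ⟨i, j, hij, hjn, hpij⟩ : ∃ i j, i < j ∧ j < n ∧ p i = p j := by
      push Not at hinj
      obtain ⟨i, j, hi, hj, hpij, hne⟩ := hinj
      rcases Nat.lt_or_gt_of_ne hne with h | h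
      exacts [⟨i, j, h, hj, hpij⟩, ⟨j, i, h, hi, hpij.symm⟩]
    -- between two visits of the same vertex lies a shorter closed walk
    refine ih (j - i) (by omega) (by omega) (fun t => p (i + t)) (fun t ht => ?_) ?_
    · exact hp (i + t) (by omega)
    · simpa [Nat.add_sub_cancel' hij.le] using hpij.symm

theorem Acyclic.not_transGen_self_s5 {A : V → V → Prop} (hA : Acyclic A) (hirr : ∀ v, ¬ A v v)
    (a : V) : ¬ Relation.TransGen A a a := fun h =>
  let ⟨n, hn, p, hp0, hpn, hp⟩ := h.exists_walk
  hA.not_closed_walk hirr n hn p hp (hpn.trans hp0.symm)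

theorem Acyclic.exists_transitive_completion {A : V → V → Prop} (hA : Acyclic A)
    (hirr : ∀ v, ¬ A v v) :
    ∃ T, IsCompletion A T ∧ ∀ a b c, T a b → T b c → T a c := by
  have : IsPartialOrder V (Relation.ReflTransGen A) :=
    { antisymm := fun a b hab hba => by
        by_contra hne
        have hab' := (Relation.reflTransGen_iff_eq_or_transGen.mp hab).resolve_left
          (Ne.symm hne)
        exact hA.not_transGen_self_s5 hirr a (hab'.trans_left hba) }
  -- `T` is a strict linear extension of the reachability order of `A`
  obtain ⟨s, hs, hsub⟩ := extend_partialOrder (Relation.ReflTransGen A)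
  refine ⟨fun u v => s u v ∧ u ≠ v,
    ⟨⟨fun v h => h.2 rfl, fun u v hne => ?_⟩, fun u v huv => ?_⟩, ?_⟩
  · refine ⟨fun ⟨huv, _⟩ ⟨hvu, _⟩ => hne (antisymm huv hvu), fun hvu => ⟨?_, hne⟩⟩
    exact (total_of s u v).resolve_right fun h => hvu ⟨h, hne.symm⟩
  · exact ⟨hsub u v (.single huv), fun h => hirr u (h ▸ huv)⟩
  · rintro a b c ⟨hab, hne⟩ ⟨hbc, -⟩
    refine ⟨_root_.trans hab hbc, ?_⟩
    rintro rfl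
    exact hne (antisymm hab hbc)

theorem IsTournament.not_aug21_of_transitive {f : V → Bool} {A T : V → V → Prop}
    (hT : IsTournament T) (htrans : ∀ a b c, T a b → T b c → T a c) (c : Fin 3 → V) :
    ¬ Aug21 f A T c := by
  rintro ⟨-, hcyc, -, -⟩
  exact hT.asymm (htrans _ _ _ (hcyc 0) (hcyc 1)) (hcyc 2)

end

theorem stmt_5_general {V : Type*} (f : V → Bool) (A : V → V → Prop)
    (h : IsBipTournament f A) :
    (∃ T : V → V → Prop, IsCompletion A T ∧ ∀ c : Fin 3 → V, ¬ Aug21 f A T c) ↔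
      Acyclic A := by
  have hparts : ∀ u v, f u = f v → ¬ A u v := h.2.2.1
  constructor
  · rintro ⟨T, hT, hfree⟩
    exact acyclic_of_forall_not_aug21 hparts hT hfree
  · intro hA
    obtain ⟨T, hT, htrans⟩ := hA.exists_transitive_completion fun v => hparts v v rfl
    exact ⟨T, hT, hT.1.not_aug21_of_transitive htrans⟩

/-- There exists a tournament completion of a bipartite tournament `D` with no
augmented `(2,1)`-dicycles iff `D` is acyclic. -/
theorem stmt_5 {V : Type*} [Fintype V] (f : V → Bool) (A : V → V → Prop)
    (h : IsBipTournament f A) :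
    (∃ T : V → V → Prop, IsCompletion A T ∧ ∀ c : Fin 3 → V, ¬ Aug21 f A T c) ↔
      Acyclic A :=
  stmt_5_general f A h
end

section
/- Let D be an acyclic bipartite tournament. If there exists a tournament completion of D with exactly one augmented (2,1)-dicycle, then there exist two vertices u1 and u2 in a common partite set of D with outdegree(u1) = outdegree(u2) + 1. -/
lemma key_stmt9 {V : Type*} [Fintype V] [DecidableEq V] (f : V → Bool)
    (A : V → V → Prop) [DecidableRel A] (h : IsBipTournament f A) (hacyc : Acyclic A)
    (a b x : V) (hfab : f a = f b) (hAax : A a x) (hAxb : A x b)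
    (huniq : ∀ y, A a y → A y b → y = x) :
    (Finset.univ.filter fun w => A a w).card =
      (Finset.univ.filter fun w => A b w).card + 1 := by
  obtain ⟨-, -, hsame, hdiff⟩ := h
  have hfax : f a ≠ f x := fun hh => hsame a x hh hAax
  have hfxb : f x ≠ f b := fun hh => hsame x b hh hAxb
  have hab : a ≠ b := by
    rintro rfl
    exact (hdiff a x hfax).mp hAax hAxb
  have hnAbx : ¬ A b x := fun hh => (hdiff x b hfxb).mp hAxb hh
  have hset : (Finset.univ.filter fun w => A a w) =
      insert x (Finset.univ.filter fun w => A b w) := by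
    ext y
    simp only [Finset.mem_filter, Finset.mem_insert, Finset.mem_univ, true_and]
    constructor
    · intro hAay
      by_cases hyx : y = x
      · exact Or.inl hyx
      · right
        have hfay : f a ≠ f y := fun hh => hsame a y hh hAay
        have hfyb : f y ≠ f b := fun hh => hfay (hfab.trans hh.symm)
        by_contra hnAby
        exact hyx (huniq y hAay ((hdiff y b hfyb).mpr hnAby))
    · rintro (rfl | hAby)
      · exact hAax
      · have hfby : f b ≠ f y := fun hh => hsame b y hh hAby
        have hfay : f a ≠ f y := hfab ▸ hfby
        by_contra hnAay
        have hAya : A y a := (hdiff y a (Ne.symm hfay)).mpr hnAay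
        have hyx : y ≠ x := fun hh => hnAbx (hh ▸ hAby)
        have hya : y ≠ a := fun hh => hfay (congrArg f hh).symm
        have hyb : y ≠ b := fun hh => hfby (congrArg f hh).symm
        have hax : a ≠ x := fun hh => hfax (congrArg f hh)
        have hbx : b ≠ x := fun hh => hfxb (congrArg f hh).symm
        apply hacyc
        refine ⟨4, ![a, x, b, y], by norm_num, ?_, ?_⟩
        · have hxa := hax.symm; have hba := hab.symm; have hxb := hbx.symm
          have hay := hya.symm; have hby := hyb.symm; have hxy := hyx.symm
          intro i j hij
          fin_cases i <;> fin_cases j <;>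
            first | rfl | exact absurd hij (by assumption)
        · intro i
          fin_cases i <;> assumption
  rw [hset, Finset.card_insert_of_notMem (by simp [hnAbx])]

/-- If an acyclic bipartite tournament `D` has a tournament completion with exactly
one augmented `(2,1)`-dicycle, then some two vertices `u1, u2` in a common partite
set of `D` satisfy `deg⁺(u1) = deg⁺(u2) + 1`. -/
theorem stmt_9 {V : Type*} [Fintype V] [DecidableEq V] (f : V → Bool)
    (A : V → V → Prop) [DecidableRel A] (h : IsBipTournament f A) (hacyc : Acyclic A)
    (hex : ∃ T : V → V → Prop, IsCompletion A T ∧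
      ∃ c : Fin 3 → V, Aug21 f A T c ∧
        ∀ c' : Fin 3 → V, Aug21 f A T c' → Set.range c' = Set.range c) :
    ∃ u1 u2 : V, f u1 = f u2 ∧
      (Finset.univ.filter fun w => A u1 w).card =
        (Finset.univ.filter fun w => A u2 w).card + 1 := by
  obtain ⟨T, ⟨⟨hTirr, hTasym⟩, hcomp⟩, c, ⟨hcinj, hcyc3, hnotA, hnotall⟩, huniq⟩ := hex
  obtain ⟨hsame, hdiff⟩ : (∀ u v, f u = f v → ¬ A u v) ∧
      (∀ u v, f u ≠ f v → (A u v ↔ ¬ A v u)) := ⟨h.2.2.1, h.2.2.2⟩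
  have hcover : ∀ i j : Fin 3, j = i ∨ j = i + 1 ∨ j = i + 1 + 1 := by decide
  obtain ⟨i, hi⟩ : ∃ i : Fin 3, f (c i) = f (c (i + 1)) := by
    by_cases h01 : f (c 0) = f (c 1)
    · exact ⟨0, h01⟩
    · by_cases h12 : f (c 1) = f (c 2)
      · exact ⟨1, h12⟩
      · refine ⟨2, ?_⟩
        show f (c 2) = f (c 0)
        cases hb0 : f (c 0) <;> cases hb1 : f (c 1) <;> cases hb2 : f (c 2) <;> simp_all
  set b := c i with hbdef
  set a := c (i + 1) with hadef
  set x := c (i + 1 + 1) with hxdef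
  have hfab : f a = f b := hi.symm
  have h3 : ∀ j : Fin 3, j + 1 + 1 + 1 = j := by decide
  have hTba : T b a := hcyc3 i
  have hTax : T a x := hcyc3 (i + 1)
  have hTxb : T x b := by have := hcyc3 (i + 1 + 1); rwa [h3 i] at this
  have hab : a ≠ b := fun hh => (by decide : ∀ i : Fin 3, i + 1 ≠ i) i (hcinj hh)
  have hax : a ≠ x := fun hh => (by decide : ∀ i : Fin 3, i + 1 ≠ i + 1 + 1) i (hcinj hh)
  have hbx : b ≠ x := fun hh => (by decide : ∀ i : Fin 3, i ≠ i + 1 + 1) i (hcinj hh)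
  have hfxa : f x ≠ f a := by
    intro hh
    apply hnotall
    have hall : ∀ j, f (c j) = f (c i) := by
      intro j
      rcases hcover i j with rfl | rfl | rfl
      · rfl
      · exact hi.symm
      · exact hh.trans hi.symm
    exact ⟨(hall 0).trans (hall 1).symm, (hall 1).trans (hall 2).symm⟩
  have hfxb : f x ≠ f b := fun hh => hfxa (hh.trans hfab.symm)
  have hAax : A a x := by
    by_contra hn
    have hAxa : A x a := by
      by_contra hn2
      exact hn ((hdiff a x hfxa.symm).mpr hn2)
    exact (hTasym a x hax).mp hTax (hcomp x a hAxa)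
  have hAxb : A x b := by
    by_contra hn
    have hAbx : A b x := by
      by_contra hn2
      exact hn ((hdiff x b hfxb).mpr hn2)
    exact (hTasym x b (Ne.symm hbx)).mp hTxb (hcomp b x hAbx)
  have huniq' : ∀ y, A a y → A y b → y = x := by
    intro y hAay hAyb
    have hfay : f a ≠ f y := fun hh => hsame a y hh hAay
    have hfyb : f y ≠ f b := fun hh => hsame y b hh hAyb
    have hya : y ≠ a := fun hh => hfay (congrArg f hh).symm
    have hyb : y ≠ b := fun hh => hfyb (congrArg f hh)
    have haug : Aug21 f A T ![a, y, b] := by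
      refine ⟨?_, ?_, ⟨2, ?_⟩, ?_⟩
      · have hay := hya.symm; have hby := hyb.symm; have hba := hab.symm
        intro i1 j1 hij
        fin_cases i1 <;> fin_cases j1 <;>
          first | rfl | exact absurd hij (by assumption)
      · intro j
        fin_cases j
        · exact hcomp a y hAay
        · exact hcomp y b hAyb
        · exact hTba
      · exact hsame b a hfab.symm
      · rintro ⟨h1, -⟩
        exact hfay h1
    have hy_mem : y ∈ Set.range c := (huniq _ haug) ▸ ⟨1, rfl⟩
    obtain ⟨j, hj⟩ := hy_mem
    rcases hcover i j with rfl | rfl | rfl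
    · exact absurd hj.symm hyb
    · exact absurd hj.symm hya
    · exact hj.symm
  exact ⟨a, b, hfab, key_stmt9 f A h hacyc a b x hfab hAax hAxb huniq'⟩
end

section
/- Let X = {x1 < x2 < ... < xn} be a finite set of positive integers such that there exists l ∈ {1,...,n−2} with x_l ≡ x_{l+2} (mod 2) and x_l ≢ x_{l+1} (mod 2). Then there exists a tournament completion of D_X with exactly one augmented (2,1)-dicycle. -/

def myT {n : ℕ} (x : Fin n → ℕ) (L L2 : Fin n) (i j : Fin n) : Prop :=
  if x i % 2 = x j % 2 then
    (if (i = L2 ∧ j = L) ∨ (i = L ∧ j = L2) then i = L2 ∧ j = L else x i < x j)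
  else x i < x j

lemma range3 {α : Type*} (g : Fin 3 → α) : Set.range g = {g 0, g 1, g 2} := by
  ext v
  constructor
  · rintro ⟨i, rfl⟩
    fin_cases i <;> simp
  · intro hv
    simp only [Set.mem_insert_iff, Set.mem_singleton_iff] at hv
    rcases hv with h | h | h
    exacts [⟨0, h.symm⟩, ⟨1, h.symm⟩, ⟨2, h.symm⟩]

lemma beq_parity (a b : ℕ) : ((a % 2 == 0) = (b % 2 == 0)) ↔ a % 2 = b % 2 := by
  rcases Nat.mod_two_eq_zero_or_one a with h | h <;>
    rcases Nat.mod_two_eq_zero_or_one b with h' | h' <;> simp [h, h']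

lemma main_aux (n : ℕ) (x : Fin n → ℕ) (hmono : StrictMono x) (L L1 L2 : Fin n)
    (hLT1 : L < L1) (hLT2 : L1 < L2)
    (hadj : ∀ w : Fin n, L < w → w < L2 → w = L1)
    (h1' : x L % 2 = x L2 % 2) (h2' : x L % 2 ≠ x L1 % 2) :
    ∃ T : Fin n → Fin n → Prop,
      IsCompletion (fun i j => x i < x j ∧ x i % 2 ≠ x j % 2) T ∧
      ∃ c : Fin 3 → Fin n,
        Aug21 (fun i => x i % 2 == 0) (fun i j => x i < x j ∧ x i % 2 ≠ x j % 2) T c ∧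
        ∀ c' : Fin 3 → Fin n,
          Aug21 (fun i => x i % 2 == 0) (fun i j => x i < x j ∧ x i % 2 ≠ x j % 2) T c' →
            Set.range c' = Set.range c := by
  have hxinj : Function.Injective x := hmono.injective
  have hLL2 : L ≠ L2 := ne_of_lt (hLT1.trans hLT2)
  have hLL1 : L ≠ L1 := ne_of_lt hLT1
  have hL1L2 : L1 ≠ L2 := ne_of_lt hLT2
  have hxLL1 : x L < x L1 := hmono hLT1
  have hxL1L2 : x L1 < x L2 := hmono hLT2
  refine ⟨myT x L L2, ⟨⟨?_, ?_⟩, ?_⟩, ![L2, L, L1], ⟨?_, ?_, ?_, ?_⟩, ?_⟩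
  · -- irreflexive
    intro v
    unfold myT
    rw [if_pos rfl]
    split_ifs with h
    · rintro ⟨e1, e2⟩
      exact hLL2 (e2 ▸ e1 ▸ rfl)
    · exact lt_irrefl _
  · -- asymmetry
    intro u v huv
    have hx : x u ≠ x v := fun h => huv (hxinj h)
    unfold myT
    by_cases hp : x u % 2 = x v % 2
    · rw [if_pos hp, if_pos hp.symm]
      by_cases hpair : (u = L2 ∧ v = L) ∨ (u = L ∧ v = L2)
      · rw [if_pos hpair, if_pos (by tauto)]
        constructor
        · rintro ⟨rfl, rfl⟩ ⟨e1, e2⟩; exact hLL2 (e1 ▸ e2 ▸ rfl)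
        · intro h
          rcases hpair with ⟨rfl, rfl⟩ | ⟨rfl, rfl⟩
          · exact ⟨rfl, rfl⟩
          · exact absurd ⟨rfl, rfl⟩ h
      · rw [if_neg hpair, if_neg (by tauto)]
        omega
    · rw [if_neg hp, if_neg (fun h => hp h.symm)]
      omega
  · -- completion
    rintro u v ⟨hlt, hp⟩
    unfold myT
    rw [if_neg hp]
    exact hlt
  · -- injective c
    intro i j hij
    fin_cases i <;> fin_cases j <;> simp_all
  · -- cycle arcs
    intro i
    fin_cases i
    · show myT x L L2 L2 L
      unfold myT
      rw [if_pos h1'.symm, if_pos (Or.inl ⟨rfl, rfl⟩)]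
      exact ⟨rfl, rfl⟩
    · show myT x L L2 L L1
      unfold myT
      rw [if_neg h2']
      exact hxLL1
    · show myT x L L2 L1 L2
      unfold myT
      rw [if_neg (by omega)]
      exact hxL1L2
  · -- non-arc
    refine ⟨0, ?_⟩
    show ¬ (x L2 < x L ∧ _)
    rintro ⟨hlt, -⟩
    omega
  · -- not all same parity
    show ¬ ((x L2 % 2 == 0) = (x L % 2 == 0) ∧ (x L % 2 == 0) = (x L1 % 2 == 0))
    rintro ⟨-, hB⟩
    rw [beq_parity] at hB
    exact h2' hB
  · -- uniqueness
    rintro c' ⟨hinj', hcyc', -, hnall⟩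
    have e0 : (0 : Fin 3) + 1 = 1 := rfl
    have e1 : (1 : Fin 3) + 1 = 2 := rfl
    have e2 : (2 : Fin 3) + 1 = 0 := rfl
    have hab : myT x L L2 (c' 0) (c' 1) := by have := hcyc' 0; rwa [e0] at this
    have hbd : myT x L L2 (c' 1) (c' 2) := by have := hcyc' 1; rwa [e1] at this
    have hda : myT x L L2 (c' 2) (c' 0) := by have := hcyc' 2; rwa [e2] at this
    simp only [beq_parity] at hnall
    have key : ∀ u v w : Fin n, myT x L L2 u v → x v % 2 ≠ x w % 2 → x w % 2 ≠ x u % 2 →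
        myT x L L2 v w → myT x L L2 w u → u = L2 ∧ v = L ∧ w = L1 := by
      intro u v w huv hvw hwu h_vw h_wu
      have hpuv : x u % 2 = x v % 2 := by omega
      unfold myT at huv h_vw h_wu
      rw [if_pos hpuv] at huv
      rw [if_neg hvw] at h_vw
      rw [if_neg hwu] at h_wu
      by_cases hpair : (u = L2 ∧ v = L) ∨ (u = L ∧ v = L2)
      · rw [if_pos hpair] at huv
        obtain ⟨hu, hv⟩ := huv
        rw [hv] at h_vw
        rw [hu] at h_wu
        have hw1 : L < w := hmono.lt_iff_lt.mp h_vw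
        have hw2 : w < L2 := hmono.lt_iff_lt.mp h_wu
        exact ⟨hu, hv, hadj w hw1 hw2⟩
      · rw [if_neg hpair] at huv
        omega
    have hcval : (![L2, L, L1] : Fin 3 → Fin n) 0 = L2 ∧
        (![L2, L, L1] : Fin 3 → Fin n) 1 = L ∧ (![L2, L, L1] : Fin 3 → Fin n) 2 = L1 :=
      ⟨rfl, rfl, rfl⟩
    obtain ⟨hc0, hc1, hc2⟩ := hcval
    by_cases hpab : x (c' 0) % 2 = x (c' 1) % 2
    · have hbd' : x (c' 1) % 2 ≠ x (c' 2) % 2 := fun h => hnall ⟨hpab, h⟩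
      obtain ⟨ha, hb, hd⟩ := key _ _ _ hab hbd' (by omega) hbd hda
      rw [range3, range3, hc0, hc1, hc2, ha, hb, hd]
    · by_cases hpbd : x (c' 1) % 2 = x (c' 2) % 2
      · obtain ⟨hb, hd, ha⟩ := key _ _ _ hbd (by omega) (by omega) hda hab
        rw [range3, range3, hc0, hc1, hc2, ha, hb, hd]
        ext v; simp only [Set.mem_insert_iff, Set.mem_singleton_iff]; tauto
      · have hpda : x (c' 2) % 2 = x (c' 0) % 2 := by omega
        obtain ⟨hd, ha, hb⟩ := key _ _ _ hda (by omega) (by omega) hab hbd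
        rw [range3, range3, hc0, hc1, hc2, ha, hb, hd]
        ext v; simp only [Set.mem_insert_iff, Set.mem_singleton_iff]; tauto

/-- Let `X = {x 0 < x 1 < ⋯ < x (n-1)}` be positive integers with
`x l ≡ x (l+2) ≢ x (l+1) (mod 2)` for some `l`. Then `D_X` (arcs `i → j` iff
`x i < x j` and they have different parities) has a tournament completion with
exactly one augmented `(2,1)`-dicycle. -/
theorem stmt_10 (n : ℕ) (x : Fin n → ℕ) (hmono : StrictMono x)
    (hpos : ∀ i, 0 < x i) (l : ℕ) (hl : l + 2 < n)
    (h1 : x ⟨l, by omega⟩ % 2 = x ⟨l + 2, hl⟩ % 2)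
    (h2 : x ⟨l, by omega⟩ % 2 ≠ x ⟨l + 1, by omega⟩ % 2) :
    ∃ T : Fin n → Fin n → Prop,
      IsCompletion (fun i j => x i < x j ∧ x i % 2 ≠ x j % 2) T ∧
      ∃ c : Fin 3 → Fin n,
        Aug21 (fun i => x i % 2 == 0) (fun i j => x i < x j ∧ x i % 2 ≠ x j % 2) T c ∧
        ∀ c' : Fin 3 → Fin n,
          Aug21 (fun i => x i % 2 == 0) (fun i j => x i < x j ∧ x i % 2 ≠ x j % 2) T c' →
            Set.range c' = Set.range c := by
  
  refine main_aux n x hmono ⟨l, by omega⟩ ⟨l + 1, by omega⟩ ⟨l + 2, hl⟩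
    (by simp [Fin.lt_def]) (by simp [Fin.lt_def]) ?_ h1 h2
  intro w hw1 hw2
  have a1 : l < w.val := hw1
  have a2 : w.val < l + 2 := hw2
  exact Fin.ext (show w.val = l + 1 by omega)
end

section
/- Let n be a positive integer and X = {x1 < x2 < ... < xn} ⊂ ℤ⁺ such that D_X is isomorphic to D_{X^1_n} or D_{X^2_n}. If x, y, z ∈ X satisfy x ≡ y ≡ z (mod 2) and x < y < z, then N⁺_{D_X}(x) ∩ N⁻_{D_X}(z) ≠ ∅, and moreover N⁺_{D_X}(x) ∩ N⁻_{D_X}(y) ≠ ∅ or N⁺_{D_X}(y) ∩ N⁻_{D_X}(z) ≠ ∅. -/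
def x1fun (i : ℕ) : ℕ := 6 * (i / 4) + [1, 3, 4, 6].getD (i % 4) 0
def x2fun (i : ℕ) : ℕ := 6 * (i / 4) + [1, 2, 4, 5].getD (i % 4) 0

lemma x1fun_eq (i : ℕ) : x1fun i = 6 * (i / 4) +
    (if i % 4 = 0 then 1 else if i % 4 = 1 then 3 else if i % 4 = 2 then 4 else 6) := by
  unfold x1fun
  have h : i % 4 = 0 ∨ i % 4 = 1 ∨ i % 4 = 2 ∨ i % 4 = 3 := by omega
  rcases h with h | h | h | h <;> rw [h] <;> simp

lemma x2fun_eq (i : ℕ) : x2fun i = 6 * (i / 4) +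
    (if i % 4 = 0 then 1 else if i % 4 = 1 then 2 else if i % 4 = 2 then 4 else 5) := by
  unfold x2fun
  have h : i % 4 = 0 ∨ i % 4 = 1 ∨ i % 4 = 2 ∨ i % 4 = 3 := by omega
  rcases h with h | h | h | h <;> rw [h] <;> simp

lemma gmono {g : ℕ → ℕ} (hg : g = x1fun ∨ g = x2fun) : StrictMono g := by
  rcases hg with rfl | rfl <;> intro i j h <;>
    [rw [x1fun_eq, x1fun_eq]; rw [x2fun_eq, x2fun_eq]] <;> split_ifs <;> omega

lemma grun {g : ℕ → ℕ} (hg : g = x1fun ∨ g = x2fun) (i : ℕ) :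
    ¬(g (i+1) % 2 = g i % 2 ∧ g (i+2) % 2 = g i % 2) := by
  rcases hg with rfl | rfl <;>
    [rw [x1fun_eq, x1fun_eq, x1fun_eq]; rw [x2fun_eq, x2fun_eq, x2fun_eq]] <;>
    split_ifs <;> omega

lemma gbetween {g : ℕ → ℕ} (hg : g = x1fun ∨ g = x2fun) {s u : ℕ}
    (h2 : s + 2 ≤ u) (hp : g s % 2 = g u % 2) :
    ∃ m, s < m ∧ m < u ∧ g m % 2 ≠ g s % 2 := by
  by_contra h
  push_neg at h
  have h1 : g (s+1) % 2 = g s % 2 := h _ (by omega) (by omega)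
  have h2' : g (s+2) % 2 = g s % 2 := by
    rcases eq_or_lt_of_le h2 with he | hl
    · rw [he]; omega
    · exact h _ (by omega) hl
  exact grun hg s ⟨h1, h2'⟩

/-- If `D_X` (vertices `x 0 < ⋯ < x (n-1)`, arcs by order and opposite parity) is
isomorphic to `D_{X¹ₙ}` or `D_{X²ₙ}`, and `x a < x b < x c` all have the same parity,
then `N⁺(x a) ∩ N⁻(x c) ≠ ∅`, and `N⁺(x a) ∩ N⁻(x b) ≠ ∅` or `N⁺(x b) ∩ N⁻(x c) ≠ ∅`. -/
theorem stmt_12 (n : ℕ) (x : Fin n → ℕ) (hmono : StrictMono x) (hpos : ∀ i, 0 < x i)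
    (hiso : ∃ g : ℕ → ℕ, (g = x1fun ∨ g = x2fun) ∧
      ∃ e : Fin n ≃ Fin n, ∀ i j,
        (x i < x j ∧ x i % 2 ≠ x j % 2) ↔
          (g (e i) < g (e j) ∧ g (e i) % 2 ≠ g (e j) % 2))
    (a b c : Fin n) (hab : x a < x b) (hbc : x b < x c)
    (hpab : x a % 2 = x b % 2) (hpbc : x b % 2 = x c % 2) :
    (∃ w : Fin n, (x a < x w ∧ x a % 2 ≠ x w % 2) ∧ (x w < x c ∧ x w % 2 ≠ x c % 2)) ∧
    ((∃ w : Fin n, (x a < x w ∧ x a % 2 ≠ x w % 2) ∧ (x w < x b ∧ x w % 2 ≠ x b % 2)) ∨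
     (∃ w : Fin n, (x b < x w ∧ x b % 2 ≠ x w % 2) ∧ (x w < x c ∧ x w % 2 ≠ x c % 2))) := by
  obtain ⟨g, hg, e, hiff⟩ := hiso
  have hgm : StrictMono g := gmono hg
  -- distinctness of a, b, c
  have hne_ab : a ≠ b := fun h => by simp [h] at hab
  have hne_bc : b ≠ c := fun h => by simp [h] at hbc
  have hne_ac : a ≠ c := fun h => by rw [h] at hab; omega
  -- same parity is preserved by the isomorphism
  have samepar : ∀ i j : Fin n, i ≠ j → x i % 2 = x j % 2 →
      g (e i) % 2 = g (e j) % 2 := by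
    intro i j hne hp
    by_contra hne2
    rcases lt_trichotomy (g (e i)) (g (e j)) with hl | heq | hl
    · exact ((hiff i j).2 ⟨hl, hne2⟩).2 hp
    · exact hne2 (by rw [heq])
    · exact ((hiff j i).2 ⟨hl, fun hh => hne2 hh.symm⟩).2 hp.symm
  set pa : ℕ := ↑(e a) with hpa
  set pb : ℕ := ↑(e b) with hpb
  set pc : ℕ := ↑(e c) with hpc
  have hdab : pa ≠ pb := fun h => hne_ab (e.injective (Fin.val_injective h))
  have hdbc : pb ≠ pc := fun h => hne_bc (e.injective (Fin.val_injective h))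
  have hdac : pa ≠ pc := fun h => hne_ac (e.injective (Fin.val_injective h))
  have hparab : g pa % 2 = g pb % 2 := samepar a b hne_ab hpab
  have hparbc : g pb % 2 = g pc % 2 := samepar b c hne_bc hpbc
  -- sorted extremes
  obtain ⟨s, u, hsmem, humem, hsu⟩ : ∃ s u : ℕ,
      (s = pa ∨ s = pb ∨ s = pc) ∧ (u = pa ∨ u = pb ∨ u = pc) ∧ s + 2 ≤ u := by
    refine ⟨min pa (min pb pc), max pa (max pb pc), ?_, ?_, ?_⟩ <;> omega
  have hparsu : g s % 2 = g u % 2 := by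
    rcases hsmem with rfl | rfl | rfl <;> rcases humem with h | h | h <;> rw [h] <;> omega
  obtain ⟨m, hsm, hmu, hmpar⟩ := gbetween hg hsu hparsu
  have hun : u < n := by
    rcases humem with rfl | rfl | rfl
    · exact (e a).isLt
    · exact (e b).isLt
    · exact (e c).isLt
  have hmn : m < n := by omega
  have hsn : s < n := by omega
  set sfin : Fin n := ⟨s, hsn⟩ with hsfin
  set ufin : Fin n := ⟨u, hun⟩ with hufin
  set wfin : Fin n := ⟨m, hmn⟩ with hwfin
  set w : Fin n := e.symm wfin with hw
  set vs : Fin n := e.symm sfin with hvs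
  set vu : Fin n := e.symm ufin with hvu
  have hes : (↑(e vs) : ℕ) = s := by rw [hvs, e.apply_symm_apply]
  have heu : (↑(e vu) : ℕ) = u := by rw [hvu, e.apply_symm_apply]
  have hew : (↑(e w) : ℕ) = m := by rw [hw, e.apply_symm_apply]
  -- arcs pulled back to D_X
  have arc1 : x vs < x w ∧ x vs % 2 ≠ x w % 2 := by
    apply (hiff vs w).2
    rw [hes, hew]
    exact ⟨hgm hsm, fun h => hmpar h.symm⟩
  have arc2 : x w < x vu ∧ x w % 2 ≠ x vu % 2 := by
    apply (hiff w vu).2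
    rw [hew, heu]
    exact ⟨hgm hmu, by omega⟩
  -- vs is one of a, b, c
  have hxvs : x a ≤ x vs ∧ x vs % 2 = x a % 2 := by
    rcases hsmem with h | h | h
    · have : vs = a := by rw [hvs]; rw [show sfin = e a from Fin.val_injective h]; exact e.symm_apply_apply a
      rw [this]; exact ⟨le_refl _, rfl⟩
    · have : vs = b := by rw [hvs]; rw [show sfin = e b from Fin.val_injective h]; exact e.symm_apply_apply b
      rw [this]; exact ⟨le_of_lt hab, hpab.symm⟩
    · have : vs = c := by rw [hvs]; rw [show sfin = e c from Fin.val_injective h]; exact e.symm_apply_apply c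
      rw [this]; exact ⟨le_of_lt (hab.trans hbc), by omega⟩
  have hxvu : x vu ≤ x c ∧ x vu % 2 = x c % 2 := by
    rcases humem with h | h | h
    · have : vu = a := by rw [hvu]; rw [show ufin = e a from Fin.val_injective h]; exact e.symm_apply_apply a
      rw [this]; exact ⟨le_of_lt (hab.trans hbc), by omega⟩
    · have : vu = b := by rw [hvu]; rw [show ufin = e b from Fin.val_injective h]; exact e.symm_apply_apply b
      rw [this]; exact ⟨le_of_lt hbc, hpbc⟩
    · have : vu = c := by rw [hvu]; rw [show ufin = e c from Fin.val_injective h]; exact e.symm_apply_apply c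
      rw [this]; exact ⟨le_refl _, rfl⟩
  obtain ⟨ha1, ha2⟩ := arc1
  obtain ⟨hb1, hb2⟩ := arc2
  obtain ⟨hc1, hc2⟩ := hxvs
  obtain ⟨hd1, hd2⟩ := hxvu
  constructor
  · exact ⟨w, ⟨by omega, by omega⟩, ⟨by omega, by omega⟩⟩
  · rcases Nat.lt_or_ge (x w) (x b) with h | h
    · exact Or.inl ⟨w, ⟨by omega, by omega⟩, ⟨by omega, by omega⟩⟩
    · exact Or.inr ⟨w, ⟨by omega, by omega⟩, ⟨by omega, by omega⟩⟩
end

section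
/- Let D be a bipartite tournament with partite sets V1, V2, let A = {(u,v) | {u,v} ⊆ V_i for some i}, and let S ⊆ A × A and I ⊆ A satisfy: (A1) ((x,y),(u,v)) ∈ S iff ((v,u),(y,x)) ∈ S; (A2) (u1,v1) ∈ I iff there exist k ≥ 2 and vertices u2,v2,...,uk,vk with ((u_i,v_i),(u_{i+1},v_{i+1})) ∈ S for all i ∈ [k] and (u_{k+1},v_{k+1}) = (v_l,u_l) for some l ∈ [k−1]. If for any two vertices u, v in a common partite set at most one of (u,v), (v,u) is in I, then there exists a tournament completion T of D such that no pair of arcs {xy, vu} ⊆ A(T) satisfies ((x,y),(u,v)) ∈ S. -/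
/-- Property (A2): `p0` starts a chain `(u₁,v₁) ⇝ (u₂,v₂) ⇝ ⋯ ⇝ (u_{k+1},v_{k+1})`
under `S` (for some `k ≥ 2`) with `(u_{k+1}, v_{k+1}) = (v_l, u_l)` for some `l ∈ [k-1]`. -/
def SChain {V : Type*} (S : V × V → V × V → Prop) (p0 : V × V) : Prop :=
  ∃ k : ℕ, 2 ≤ k ∧ ∃ p : ℕ → V × V, p 1 = p0 ∧
    (∀ i, 1 ≤ i → i ≤ k → S (p i) (p (i + 1))) ∧
    ∃ l, 1 ≤ l ∧ l ≤ k - 1 ∧ p (k + 1) = ((p l).2, (p l).1)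

open Relation

namespace Stmt16Aux

variable {V : Type*}

def Sw (p : V × V) : V × V := (p.2, p.1)

@[simp] lemma Sw_Sw (p : V × V) : Sw (Sw p) = p := rfl

def ChainFn (S : V × V → V × V → Prop) (a b : V × V) (m : ℕ) (g : ℕ → V × V) : Prop :=
  g 0 = a ∧ g m = b ∧ ∀ i < m, S (g i) (g (i + 1))

lemma transGen_chain {S : V × V → V × V → Prop} {a b : V × V}
    (h : TransGen S a b) : ∃ m g, 1 ≤ m ∧ ChainFn S a b m g := by
  induction h with
  | @single c hab =>
      refine ⟨1, fun i => if i = 0 then a else c, le_refl 1, by simp, by simp, ?_⟩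
      intro i hi
      have : i = 0 := by omega
      subst this; simpa using hab
  | @tail b c hab hbc ih =>
      obtain ⟨m, g, hm, h0, hmb, hstep⟩ := ih
      refine ⟨m + 1, fun i => if i ≤ m then g i else c, by omega, ?_, ?_, ?_⟩
      · simpa using h0
      · simp [show ¬ (m + 1 ≤ m) by omega]
      · intro i hi
        rcases lt_or_ge i m with h1 | h1
        · simpa [show i ≤ m by omega, show i + 1 ≤ m by omega] using hstep i h1
        · have : i = m := by omega
          subst this
          simpa [hmb, show ¬ (i + 1 ≤ i) by omega] using hbc

lemma chain_concat {S : V × V → V × V → Prop} {a b c : V × V} {m n : ℕ}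
    {g1 g2 : ℕ → V × V} (h1 : ChainFn S a b m g1) (h2 : ChainFn S b c n g2) :
    ChainFn S a c (m + n) (fun i => if i < m then g1 i else g2 (i - m)) := by
  obtain ⟨h10, h1m, h1s⟩ := h1
  obtain ⟨h20, h2n, h2s⟩ := h2
  refine ⟨?_, ?_, ?_⟩
  · rcases Nat.eq_zero_or_pos m with hm | hm
    · subst hm
      have hab : a = b := by rw [← h10]; exact h1m
      simp [h20, hab]
    · simpa [hm] using h10
  · simpa [show ¬ (m + n < m) by omega] using h2n
  · intro i hi
    rcases lt_or_ge (i + 1) m with h | h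
    · simpa [show i < m by omega, h] using h1s i (by omega)
    · rcases lt_or_ge i m with h' | h'
      · have him : i + 1 = m := by omega
        have := h1s i h'
        rw [him, h1m] at this
        simpa [h', show ¬ (i + 1 < m) by omega, him, h20] using this
      · have := h2s (i - m) (by omega)
        simpa [show ¬ (i < m) by omega, show ¬ (i + 1 < m) by omega,
          show i + 1 - m = i - m + 1 by omega] using this

lemma sChain_of_loops {S : V × V → V × V → Prop} {p : V × V}
    (h1 : TransGen S p (Sw p)) (h2 : TransGen S (Sw p) p) : SChain S p := by
  obtain ⟨m, g1, hm, hc1⟩ := transGen_chain h1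
  obtain ⟨n, g2, hn, hc2⟩ := transGen_chain h2
  have hc123 := chain_concat (chain_concat hc1 hc2) hc1
  set G : ℕ → V × V :=
    (fun i => if i < m + n then (fun i => if i < m then g1 i else g2 (i - m)) i
      else g1 (i - (m + n))) with hG
  set k : ℕ := m + n + m with hk
  obtain ⟨hG0, hGk, hGs⟩ := hc123
  refine ⟨k, by omega, fun i => G (i - 1), ?_, ?_, 1, le_refl 1, by omega, ?_⟩
  · simpa using hG0
  · intro i hi1 hik
    have := hGs (i - 1) (by omega)
    simpa [show i - 1 + 1 = i by omega, show i + 1 - 1 = i by omega] using this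
  · show G (k + 1 - 1) = ((G (1 - 1)).2, (G (1 - 1)).1)
    rw [show k + 1 - 1 = k by omega, show (1 : ℕ) - 1 = 0 by rfl, hG0, hGk]
    rfl

end Stmt16Aux

namespace Stmt16Aux

variable {V : Type*}

lemma sw_step {S : V × V → V × V → Prop}
    (hA1 : ∀ x y u v : V, S (x, y) (u, v) ↔ S (v, u) (y, x))
    {p q : V × V} (h : S p q) : S (Sw q) (Sw p) :=
  (hA1 p.1 p.2 q.1 q.2).mp h

lemma sw_rtg {S : V × V → V × V → Prop}
    (hA1 : ∀ x y u v : V, S (x, y) (u, v) ↔ S (v, u) (y, x))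
    {p q : V × V} (h : ReflTransGen S p q) : ReflTransGen S (Sw q) (Sw p) := by
  induction h with
  | refl => exact .refl
  | tail _ h2 ih => exact .head (sw_step hA1 h2) ih

def Good (S : V × V → V × V → Prop) (O : Set (V × V)) : Prop :=
  (∀ p ∈ O, ∀ q, S p q → q ∈ O) ∧ ∀ p, ¬ (p ∈ O ∧ Sw p ∈ O)

lemma mem_of_rtg {S : V × V → V × V → Prop} {O : Set (V × V)} (hO : Good S O)
    {p q : V × V} (hp : p ∈ O) (h : ReflTransGen S p q) : q ∈ O := by
  induction h with
  | refl => exact hp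
  | tail _ h2 ih => exact hO.1 _ ih _ h2

def Bad (S : V × V → V × V → Prop) (O : Set (V × V)) (p : V × V) : Prop :=
  ∃ q, ReflTransGen S p q ∧ (Sw q ∈ O ∨ ReflTransGen S p (Sw q))

lemma atMostOneBad {S : V × V → V × V → Prop}
    (hA1 : ∀ x y u v : V, S (x, y) (u, v) ↔ S (v, u) (y, x))
    {O : Set (V × V)} (hO : Good S O) {p : V × V} (hne : p ≠ Sw p)
    (hnb : ¬ (TransGen S p (Sw p) ∧ TransGen S (Sw p) p))
    (hb1 : Bad S O p) (hb2 : Bad S O (Sw p)) : False := by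
  obtain ⟨q, hpq, hq⟩ := hb1
  obtain ⟨r, hpr, hr⟩ := hb2
  rcases hq with hq | hq <;> rcases hr with hr | hr
  · have h1 : ReflTransGen S (Sw q) (Sw p) := sw_rtg hA1 hpq
    exact hO.2 r ⟨mem_of_rtg hO hq (h1.trans hpr), hr⟩
  · have hrp : ReflTransGen S r p := by simpa using sw_rtg hA1 hr
    have hspp : ReflTransGen S (Sw p) p := hpr.trans hrp
    have h1 : ReflTransGen S (Sw q) (Sw p) := sw_rtg hA1 hpq
    exact hO.2 q ⟨mem_of_rtg hO hq (h1.trans (hspp.trans hpq)), hq⟩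
  · have hqsp : ReflTransGen S q (Sw p) := by simpa using sw_rtg hA1 hq
    have hpsp : ReflTransGen S p (Sw p) := hpq.trans hqsp
    have hsrp : ReflTransGen S (Sw r) p := by simpa using sw_rtg hA1 hpr
    exact hO.2 r ⟨mem_of_rtg hO hr (hsrp.trans (hpsp.trans hpr)), hr⟩
  · have hqsp : ReflTransGen S q (Sw p) := by simpa using sw_rtg hA1 hq
    have hpsp : ReflTransGen S p (Sw p) := hpq.trans hqsp
    have hrp : ReflTransGen S r p := by simpa using sw_rtg hA1 hr
    have hspp : ReflTransGen S (Sw p) p := hpr.trans hrp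
    exact hnb ⟨(reflTransGen_iff_eq_or_transGen.mp hpsp).resolve_left (fun e => hne e.symm),
      (reflTransGen_iff_eq_or_transGen.mp hspp).resolve_left (fun e => hne e)⟩

lemma good_extend {S : V × V → V × V → Prop} {O : Set (V × V)} (hO : Good S O)
    {p : V × V} (hnb : ¬ Bad S O p) :
    Good S (O ∪ {r | ReflTransGen S p r}) := by
  constructor
  · rintro r (hr | hr) q hq
    · exact Or.inl (hO.1 _ hr _ hq)
    · exact Or.inr (ReflTransGen.tail hr hq)
  · rintro q ⟨(h1 | h1), (h2 | h2)⟩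
    · exact hO.2 q ⟨h1, h2⟩
    · exact hnb ⟨Sw q, h2, Or.inl (by simpa using h1)⟩
    · exact hnb ⟨q, h1, Or.inl h2⟩
    · exact hnb ⟨q, h1, Or.inr h2⟩

end Stmt16Aux

/-- Lemma 4.1: given `S ⊆ A × A` satisfying (A1) and `I` defined by (A2), if for any
two vertices `u, v` in a common partite set at most one of `(u,v)`, `(v,u)` is in `I`,
then some tournament completion `T` of `D` has no pair of arcs `xy, vu ∈ A(T)` with
`((x,y),(u,v)) ∈ S`. -/
theorem stmt_16 {V : Type*} [Fintype V] (f : V → Bool) (A : V → V → Prop)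
    (h : IsBipTournament f A)
    (S : V × V → V × V → Prop) (I : V × V → Prop)
    (hSdom : ∀ p q, S p q → f p.1 = f p.2 ∧ f q.1 = f q.2)
    (hA1 : ∀ x y u v : V, S (x, y) (u, v) ↔ S (v, u) (y, x))
    (hA2 : ∀ p, I p ↔ SChain S p)
    (hI : ∀ u v : V, u ≠ v → f u = f v → ¬ (I (u, v) ∧ I (v, u))) :
    ∃ T : V → V → Prop, IsCompletion A T ∧
      ∀ x y u v : V, T x y → T v u → ¬ S (x, y) (u, v) := by
  classical
  open Stmt16Aux in
  -- the no-two-way-cycle fact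
  have hnb : ∀ p : V × V, p.1 ≠ p.2 →
      ¬ (Relation.TransGen S p (Sw p) ∧ Relation.TransGen S (Sw p) p) := by
    rintro p hne ⟨h1, h2⟩
    have hf : f p.1 = f p.2 := by
      obtain ⟨m, g, hm, h0, _, hs⟩ := transGen_chain h1
      have := (hSdom (g 0) (g 1) (hs 0 hm)).1
      rwa [h0] at this
    have hIp : I p := (hA2 p).mpr (sChain_of_loops h1 h2)
    have hIsp : I (Sw p) := (hA2 (Sw p)).mpr
      (sChain_of_loops (p := Sw p) (by simpa using h2) (by simpa using h1))
    exact hI p.1 p.2 hne hf ⟨hIp, hIsp⟩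
  -- Zorn: a maximal good set
  obtain ⟨M, hM⟩ : ∃ M, Maximal (· ∈ {O : Set (V × V) | Good S O}) M := by
    apply zorn_subset
    intro c hc hchain
    refine ⟨⋃₀ c, ⟨?_, ?_⟩, fun s hs => Set.subset_sUnion_of_mem hs⟩
    · rintro p ⟨s, hs, hps⟩ q hq
      exact ⟨s, hs, (hc hs).1 _ hps _ hq⟩
    · rintro q ⟨⟨s, hs, h1⟩, ⟨t, ht, h2⟩⟩
      rcases hchain.total hs ht with hst | hst
      · exact (hc ht).2 q ⟨hst h1, h2⟩
      · exact (hc hs).2 q ⟨h1, hst h2⟩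
  have hMg : Good S M := hM.1
  have hcomplete : ∀ p : V × V, p.1 ≠ p.2 → p ∈ M ∨ Sw p ∈ M := by
    intro p hne
    by_contra hcon
    push_neg at hcon
    have hpne : p ≠ Sw p := fun e => hne (congrArg Prod.fst e)
    have hkey : ¬ Bad S M p ∨ ¬ Bad S M (Sw p) := by
      by_contra hc
      push_neg at hc
      exact atMostOneBad hA1 hMg hpne (hnb p hne) hc.1 hc.2
    rcases hkey with hnbad | hnbad
    · have h1 : Good S (M ∪ {r | Relation.ReflTransGen S p r}) := good_extend hMg hnbad
      have h2 := hM.2 h1 Set.subset_union_left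
      exact hcon.1 (h2 (Or.inr Relation.ReflTransGen.refl))
    · have h1 : Good S (M ∪ {r | Relation.ReflTransGen S (Sw p) r}) := good_extend hMg hnbad
      have h2 := hM.2 h1 Set.subset_union_left
      exact hcon.2 (h2 (Or.inr Relation.ReflTransGen.refl))
  refine ⟨fun u v => if f u = f v then (u ≠ v ∧ (u, v) ∈ M) else A u v, ⟨⟨?_, ?_⟩, ?_⟩, ?_⟩
  · intro v
    show ¬ (if f v = f v then v ≠ v ∧ (v, v) ∈ M else A v v)
    simp
  · intro u v huv
    show (if f u = f v then u ≠ v ∧ (u, v) ∈ M else A u v) ↔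
      ¬ (if f v = f u then v ≠ u ∧ (v, u) ∈ M else A v u)
    by_cases hf : f u = f v
    · rw [if_pos hf, if_pos hf.symm]
      constructor
      · rintro ⟨-, hm⟩ ⟨-, hm'⟩
        exact hMg.2 (u, v) ⟨hm, hm'⟩
      · intro hm
        refine ⟨huv, ?_⟩
        rcases hcomplete (u, v) huv with h1 | h1
        · exact h1
        · exact absurd ⟨huv.symm, h1⟩ hm
    · have hf' : f v ≠ f u := fun e => hf e.symm
      rw [if_neg hf, if_neg hf']
      exact h.2.2.2 u v hf
  · intro u v hAuv
    have hfne : f u ≠ f v := fun e => h.2.2.1 u v e hAuv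
    show (if f u = f v then u ≠ v ∧ (u, v) ∈ M else A u v)
    rw [if_neg hfne]
    exact hAuv
  · intro x y u v hxy hvu hS
    obtain ⟨hf1, hf2⟩ := hSdom (x, y) (u, v) hS
    simp only at hf1 hf2
    have hxy' : x ≠ y ∧ (x, y) ∈ M := by
      have : (if f x = f y then x ≠ y ∧ (x, y) ∈ M else A x y) := hxy
      rwa [if_pos hf1] at this
    have hvu' : v ≠ u ∧ (v, u) ∈ M := by
      have : (if f v = f u then v ≠ u ∧ (v, u) ∈ M else A v u) := hvu
      rwa [if_pos hf2.symm] at this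
    have huvM : (u, v) ∈ M := hMg.1 _ hxy'.2 _ hS
    exact hMg.2 (u, v) ⟨huvM, hvu'.2⟩
end
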